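/- There exists a subgroup H of Ḡ of index 10 such that the range of the natural homomorphism Ḡ → Equiv.Perm (Ḡ ⧸ H) given by left multiplication on the cosets is isomorphic (as a group) to the alternating group A₅ on five letters (this degree-10 permutation representation of A₅ is the one whose coset geometry is Mermin's pentagram). -/
import Mathlib

open Pointwise

namespace Stmt11

def a : FreeGroup (Fin 2) := FreeGroup.of 0
def b : FreeGroup (Fin 2) := FreeGroup.of 1

/-- The two relators of `π₁(W̄) = ⟨a,b | a³b²AB³Ab², (ab)²aB²Ab²AB²⟩`. -/
def rels : Set (FreeGroup (Fin 2)) :=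
  { a^3 * b^2 * a⁻¹ * (b⁻¹)^3 * a⁻¹ * b^2,
    (a * b)^2 * a * (b⁻¹)^2 * a⁻¹ * b^2 * a⁻¹ * (b⁻¹)^2 }

/-- The fundamental group `Ḡ = π₁(W̄)` of the manifold mediating the Akbulut h-cobordism. -/
abbrev Gbar := PresentedGroup rels

abbrev A5 := alternatingGroup (Fin 5)

def pa : Equiv.Perm (Fin 5) := ⟨![1,2,3,4,0], ![4,0,1,2,3], by decide, by decide⟩
def pb : Equiv.Perm (Fin 5) := ⟨![0,1,3,4,2], ![0,1,4,2,3], by decide, by decide⟩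

def α : A5 := ⟨pa, by rw [Equiv.Perm.mem_alternatingGroup]; decide⟩
def β : A5 := ⟨pb, by rw [Equiv.Perm.mem_alternatingGroup]; decide⟩

def f : Fin 2 → A5 := ![α, β]

lemma hrels : ∀ r ∈ rels, FreeGroup.lift f r = 1 := by
  intro r hr
  rcases hr with h | h <;> subst h <;>
    simp only [a, b, map_mul, map_pow, map_inv, FreeGroup.lift_apply_of, f] <;>
    · show _ = (1 : A5)
      rw [Subtype.ext_iff]
      push_cast [α, β]
      decide

def φ : Gbar →* A5 := PresentedGroup.toGroup hrels

lemma normal_of_index_two {G : Type*} [Group G] (S : Subgroup G) (h : S.index = 2) :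
    S.Normal := by
  constructor
  intro n hn g
  have h1 : g * n * g⁻¹ ∈ S ↔ ((g * n ∈ S) ↔ g⁻¹ ∈ S) :=
    Subgroup.mul_mem_iff_of_index_two h
  have h2 : g * n ∈ S ↔ ((g ∈ S) ↔ n ∈ S) := Subgroup.mul_mem_iff_of_index_two h
  rw [h1, h2]
  simp only [hn, S.inv_mem_iff, iff_true]

lemma cardA5 : Nat.card A5 = 60 := by rw [Nat.card_eq_fintype_card]; decide

lemma closure_eq_top : Subgroup.closure ({α, β} : Set A5) = ⊤ := by
  set S := Subgroup.closure ({α, β} : Set A5) with hS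
  have hα : α ∈ S := Subgroup.subset_closure (by simp)
  have hβ : β ∈ S := Subgroup.subset_closure (by simp)
  have hγ : α^2 * β ∈ S := mul_mem (pow_mem hα 2) hβ
  have ord : ∀ (p : ℕ) (x : A5), Fact p.Prime → x ∈ S → x ^ p = 1 → x ≠ 1 →
      p ∣ Nat.card S := by
    intro p x hp hx h1 h2
    have hxo : orderOf x = p := orderOf_eq_prime h1 h2
    have : orderOf (⟨x, hx⟩ : S) = p := by
      rw [← Subgroup.orderOf_coe (⟨x, hx⟩ : S)]; exact hxo
    rw [← this]
    exact orderOf_dvd_natCard _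
  have h5 : 5 ∣ Nat.card S := ord 5 α ⟨by norm_num⟩ hα (by rw [Subtype.ext_iff]; push_cast [α]; decide)
      (by rw [Ne, Subtype.ext_iff]; push_cast [α]; decide)
  have h3 : 3 ∣ Nat.card S := ord 3 β ⟨by norm_num⟩ hβ (by rw [Subtype.ext_iff]; push_cast [β]; decide)
      (by rw [Ne, Subtype.ext_iff]; push_cast [β]; decide)
  have h2 : 2 ∣ Nat.card S := ord 2 (α^2*β) ⟨by norm_num⟩ hγ
      (by rw [Subtype.ext_iff]; push_cast [α, β]; decide)
      (by rw [Ne, Subtype.ext_iff]; push_cast [α, β]; decide)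
  have h30 : 30 ∣ Nat.card S := by
    have h6 : 6 ∣ Nat.card S := (Nat.Coprime.mul_dvd_of_dvd_of_dvd (by norm_num) h2 h3)
    exact (Nat.Coprime.mul_dvd_of_dvd_of_dvd (by norm_num) h6 h5 : 6 * 5 ∣ _)
  have hdvd : Nat.card S ∣ 60 := cardA5 ▸ Subgroup.card_subgroup_dvd_card S
  have : Nat.card S = 30 ∨ Nat.card S = 60 := by
    obtain ⟨k, hk⟩ := h30
    rw [hk] at hdvd ⊢
    have hkd : k ∣ 2 := (Nat.mul_dvd_mul_iff_left (show 0 < 30 by norm_num)).mp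
        (by simpa using hdvd : 30 * k ∣ 30 * 2)
    have hk2 : k ≤ 2 := Nat.le_of_dvd (by norm_num) hkd
    have hk1 : 1 ≤ k := by
      rcases Nat.eq_zero_or_pos k with rfl | hpos
      · exfalso; have := Nat.card_pos (α := S); omega
      · exact hpos
    omega
  rcases this with h | h
  · exfalso
    have hidx : S.index = 2 := by
      have := Subgroup.index_mul_card S
      rw [h, cardA5] at this
      omega
    have : S.Normal := normal_of_index_two S hidx
    rcases this.eq_bot_or_eq_top with hb | hb <;> rw [hb] at h
    · rw [Subgroup.card_bot] at h; omega
    · rw [Subgroup.card_top, cardA5] at h; omega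
  · exact Subgroup.eq_top_of_card_eq S (by rw [h, cardA5])

lemma hsurj : Function.Surjective φ := by
  rw [← MonoidHom.range_eq_top]
  have : Set.range (f) = {α, β} := by
    ext x
    simp [f, Fin.exists_fin_two, or_comm]
  rw [MonoidHom.range_eq_map, ← PresentedGroup.closure_range_of rels,
    MonoidHom.map_closure]
  have himg : φ '' Set.range (PresentedGroup.of : Fin 2 → Gbar) = {α, β} := by
    rw [← Set.range_comp]
    rw [show φ ∘ (PresentedGroup.of : Fin 2 → Gbar) = f from
      funext fun x => PresentedGroup.toGroup.of hrels]
    exact this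
  rw [himg, closure_eq_top]

def K : Subgroup A5 := MulAction.stabilizer A5 ({3,4} : Finset (Fin 5))

instance : DecidablePred (· ∈ K) := fun g =>
  inferInstanceAs (Decidable (g • ({3,4} : Finset (Fin 5)) = {3,4}))

lemma cardK : Nat.card K = 6 := by rw [Nat.card_eq_fintype_card]; decide

lemma indexK : K.index = 10 := by
  have := Subgroup.index_mul_card K
  rw [cardK, cardA5] at this
  omega

lemma Kne : K ≠ ⊤ := by
  intro h
  have := indexK
  rw [h, Subgroup.index_top] at this
  omega

theorem exists_index_ten_subgroup_with_coset_action_A5 :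
    ∃ H : Subgroup Gbar, H.index = 10 ∧
      Nonempty ((MulAction.toPermHom Gbar (Gbar ⧸ H)).range ≃* alternatingGroup (Fin 5)) := by
  refine ⟨K.comap φ, ?_, ?_⟩
  · rw [K.index_comap_of_surjective hsurj, indexK]
  · set H := K.comap φ with hH
    have hker_le : φ.ker ≤ H := fun x hx => by
      simp only [hH, Subgroup.mem_comap, MonoidHom.mem_ker.mp hx, one_mem]
    have hcore : H.normalCore = φ.ker := by
      apply le_antisymm
      · have hnorm : (H.normalCore.map φ).Normal :=
          Subgroup.Normal.map (Subgroup.normalCore_normal H) φ hsurj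
        rcases hnorm.eq_bot_or_eq_top with hb | ht
        · exact (Subgroup.map_eq_bot_iff _).mp hb
        · exfalso
          apply Kne
          have h1 : H.normalCore.map φ ≤ H.map φ :=
            Subgroup.map_mono (Subgroup.normalCore_le H)
          rw [ht, hH, Subgroup.map_comap_eq_self_of_surjective hsurj] at h1
          exact top_le_iff.mp h1
      · exact Subgroup.normal_le_normalCore.mpr hker_le
    have hk : (MulAction.toPermHom Gbar (Gbar ⧸ H)).ker = φ.ker := by
      rw [← Subgroup.normalCore_eq_ker, hcore]
    exact ⟨((QuotientGroup.quotientKerEquivRange _).symm.trans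
      ((QuotientGroup.quotientMulEquivOfEq hk).trans
        (QuotientGroup.quotientKerEquivOfSurjective φ hsurj)))⟩

end Stmt11
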